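/- For every β ∈ ℝ and every real f, the characteristic polynomial p(t) = det(tI − 2·Ric(β, 1, 2(1+β), 0, 0, f)) factors as p(t) = t·(t + 4(β²+β+1) + f²(β−1)²)·(t² + 12(1+β)²t − (1−β)⁴f⁴ − (5β²+6β+5)(1−β)²f² + 16(2+β)(1+2β)(1+β)²). In particular, 0 is an eigenvalue of Ric(β, 1, 2(1+β), 0, 0, f). -/
import Mathlib


open Matrix Polynomial

noncomputable section

/-- The matrix `Ric(β,a,b,c,d,f)` of the Ricci operator of `A_{4,9}^β` in the
orthonormal basis of Lemma 1, where `l = 2a(1+β)` and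
`r = 4a²(β²+β+1) + c² + d² + f²(1-β)²`. -/
def Ric (β a b c d f : ℝ) : Matrix (Fin 4) (Fin 4) ℝ :=
  (1/2 : ℝ) •
    !![b^2 + c^2 + d^2 - 4*a^2*(1+β)^2,
         -a*c*β + d*f*(1-β) - c*(2*a*(1+β)),
         -d*(a + 2*a*(1+β)),
         0;
       -a*c*β + d*f*(1-β) - c*(2*a*(1+β)),
         -2*a*(2*a*(1+β)) - b^2 - c^2 + f^2*(1-β)^2,
         -c*d - a*f*(1-β)^2 - f*(2*a*(1+β))*(1-β),
         b*d;
       -d*(a + 2*a*(1+β)),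
         -c*d - a*f*(1-β)^2 - f*(2*a*(1+β))*(1-β),
         -4*a^2*β*(1+β) - b^2 - d^2 - f^2*(1-β)^2,
         -b*c;
       0,
         b*d,
         -b*c,
         -(4*a^2*(β^2+β+1) + c^2 + d^2 + f^2*(1-β)^2)]

theorem det_fin_four2 {R : Type*} [CommRing R] (M : Matrix (Fin 4) (Fin 4) R) :
    M.det =
      M 0 0 * M 1 1 * M 2 2 * M 3 3 - M 0 0 * M 1 1 * M 2 3 * M 3 2 -
        M 0 0 * M 1 2 * M 2 1 * M 3 3 + M 0 0 * M 1 2 * M 2 3 * M 3 1 +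
        M 0 0 * M 1 3 * M 2 1 * M 3 2 - M 0 0 * M 1 3 * M 2 2 * M 3 1 -
        M 0 1 * M 1 0 * M 2 2 * M 3 3 + M 0 1 * M 1 0 * M 2 3 * M 3 2 +
        M 0 1 * M 1 2 * M 2 0 * M 3 3 - M 0 1 * M 1 2 * M 2 3 * M 3 0 -
        M 0 1 * M 1 3 * M 2 0 * M 3 2 + M 0 1 * M 1 3 * M 2 2 * M 3 0 +
        M 0 2 * M 1 0 * M 2 1 * M 3 3 - M 0 2 * M 1 0 * M 2 3 * M 3 1 -
        M 0 2 * M 1 1 * M 2 0 * M 3 3 + M 0 2 * M 1 1 * M 2 3 * M 3 0 +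
        M 0 2 * M 1 3 * M 2 0 * M 3 1 - M 0 2 * M 1 3 * M 2 1 * M 3 0 -
        M 0 3 * M 1 0 * M 2 1 * M 3 2 + M 0 3 * M 1 0 * M 2 2 * M 3 1 +
        M 0 3 * M 1 1 * M 2 0 * M 3 2 - M 0 3 * M 1 1 * M 2 2 * M 3 0 -
        M 0 3 * M 1 2 * M 2 0 * M 3 1 + M 0 3 * M 1 2 * M 2 1 * M 3 0 := by
  simp only [Matrix.det_succ_row_zero, Fin.sum_univ_succ, Fin.sum_univ_zero, Matrix.det_fin_one,
    Matrix.submatrix_apply, Fin.succAbove, Fin.succ, Fin.castSucc, Fin.castAdd, Fin.castLE,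
    Fin.lt_def]
  norm_num [Fin.val_zero, Fin.val_one]
  simp only [show ((⟨2, by norm_num⟩ : Fin 4)) = 2 from rfl,
    show ((⟨3, by norm_num⟩ : Fin 4)) = 3 from rfl]
  ring


set_option maxHeartbeats 1000000 in
/-- For every `β ∈ ℝ` and every real `f`, the characteristic
polynomial `p(t) = det(t·I - 2·Ric(β,1,2(1+β),0,0,f))` factors as
`p(t) = t (t + 4(β²+β+1) + f²(β-1)²) (t² + 12(1+β)²t - (1-β)⁴f⁴ - (5β²+6β+5)(1-β)²f²
+ 16(2+β)(1+2β)(1+β)²)`.  In particular, `0` is an eigenvalue of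
`Ric(β,1,2(1+β),0,0,f)`. -/
theorem Ric_charpoly_factorization (β f : ℝ) :
    ((2 : ℝ) • Ric β 1 (2*(1+β)) 0 0 f).charpoly =
      X * (X + C (4*(β^2+β+1) + f^2*(β-1)^2)) *
        (X^2 + C (12*(1+β)^2) * X
          + C (-(1-β)^4*f^4 - (5*β^2+6*β+5)*(1-β)^2*f^2 + 16*(2+β)*(1+2*β)*(1+β)^2)) ∧
    Module.End.HasEigenvalue (Matrix.toLin' (Ric β 1 (2*(1+β)) 0 0 f)) 0 := by
  set p : ℝ := -4*(1+β) - 4*(1+β)^2 + f^2*(1-β)^2 with hp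
  set q : ℝ := -f*(1-β)^2 - 2*f*(1+β)*(1-β) with hq
  set r : ℝ := -4*β*(1+β) - 4*(1+β)^2 - f^2*(1-β)^2 with hr
  set s : ℝ := -(4*(β^2+β+1) + f^2*(1-β)^2) with hs
  have hM : (2 : ℝ) • Ric β 1 (2*(1+β)) 0 0 f =
      !![0, 0, 0, 0; 0, p, q, 0; 0, q, r, 0; 0, 0, 0, s] := by
    ext i j
    fin_cases i <;> fin_cases j <;>
      · simp [Ric, hp, hq, hr, hs]
        try ring
        try tauto
        try norm_num [Matrix.vecHead, Matrix.vecTail]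
  have hch : (!![0, 0, 0, 0; 0, p, q, 0; 0, q, r, 0; 0, 0, 0, s] :
      Matrix (Fin 4) (Fin 4) ℝ).charmatrix =
      !![X, 0, 0, 0; 0, X - C p, -C q, 0; 0, -C q, X - C r, 0; 0, 0, 0, X - C s] := by
    ext i j : 2
    fin_cases i <;> fin_cases j <;>
      norm_num [charmatrix_apply, Matrix.diagonal_apply, Fin.ext_iff]
  constructor
  · rw [hM, Matrix.charpoly, hch, det_fin_four2]
    simp only [Matrix.cons_val', Matrix.cons_val_zero, Matrix.cons_val_one, Matrix.head_cons,
      Matrix.cons_val_two, Matrix.tail_cons, Matrix.cons_val_three, Matrix.head_fin_const,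
      Matrix.empty_val', Matrix.cons_val_fin_one, Matrix.of_apply,
      mul_zero, zero_mul, sub_zero, zero_sub, add_zero, zero_add, neg_zero]
    simp only [hp, hq, hr, hs, C_mul, C_add, C_sub, C_neg, C_pow, map_ofNat, C_1, C_0]
    ring
  · apply Module.End.hasEigenvalue_of_hasEigenvector (x := ![1,0,0,0])
    constructor
    · rw [Module.End.mem_eigenspace_iff]
      have h0 : Ric β 1 (2*(1+β)) 0 0 f = (1/2 : ℝ) • ((2:ℝ) • Ric β 1 (2*(1+β)) 0 0 f) := by
        rw [smul_smul]; norm_num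
      rw [h0, hM]
      ext i
      fin_cases i <;>
        simp [Matrix.toLin'_apply, Matrix.mulVec, dotProduct, Fin.sum_univ_four]
    · simp [Function.ne_iff]
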